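/- arXiv:1909.02608 — 3 statements merged into one kernel-verified Lean document; each statement's English description precedes it below -/
import Mathlib

section
/- Let f ∈ F_q[x] be a polynomial of degree n and t a positive integer; if t is even assume 4 | (q^n − 1). If f(x^t) is irreducible over F_q, then f(x^{t^r}) is irreducible over F_q for every r ≥ 0. -/
/-!
Write `f(x^s) = f ∘ X^s` and let `b` be a root of `f`. By Capelli's lemma, `f ∘ X^s` is
irreducible iff `f` is irreducible and `X^s - b` is irreducible over `F(b)`. For `s = t` this says
that `b` is no `p`-th power in `F(b)` for every prime `p ∣ t`. These are also the primes dividing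
`t^r`, and by Capelli's theorem they decide the irreducibility of `X^(t^r) - b` as long as `t` is
odd or `-1` is a square in `F(b)`; the latter holds for even `t` because `F(b)` has
`q^n ≡ 1 (mod 4)` elements.
-/

open Polynomial IntermediateField

universe u

theorem exists_pow_eq_of_pow_eq_neg {K : Type*} [Field K] {q : ℕ} (hq : q.Prime)
    (hsq : q = 2 → IsSquare (-1 : K)) {a c : K} (hc : c ^ q = -a) : ∃ b : K, b ^ q = a := by
  rcases hq.eq_two_or_odd' with rfl | hodd
  · obtain ⟨i, hi⟩ := hsq rfl
    exact ⟨i * c, by rw [mul_pow, sq i, ← hi, hc, neg_one_mul, neg_neg]⟩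
  · exact ⟨-c, by rw [hodd.neg_pow, hc, neg_neg]⟩

-- Capelli's theorem; a square root of `-1` rules out its exceptional case `a ∈ -4 K⁴`.
theorem X_pow_sub_C_irreducible_of_forall_prime {K : Type u} [Field K] {t : ℕ} (ht : t ≠ 0)
    (hsq : Even t → IsSquare (-1 : K)) {a : K}
    (ha : ∀ p : ℕ, p.Prime → p ∣ t → ∀ b : K, b ^ p ≠ a) :
    Irreducible (X ^ t - C a) := by
  induction t using induction_on_primes generalizing K a with
  | zero => exact absurd rfl ht
  | one => simpa using irreducible_X_sub_C a
  | prime_mul p m hp IH =>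
    rw [mul_comm]
    apply X_pow_mul_sub_C_irreducible
      (X_pow_sub_C_irreducible_of_prime hp (ha p hp (dvd_mul_right _ _)))
    intro E _ _ x hx
    have hint : IsIntegral K x := not_not.mp fun h ↦ by
      simpa only [degree_zero, degree_X_pow_sub_C hp.pos,
        WithBot.natCast_ne_bot] using congr_arg degree (hx.symm.trans (dif_neg h))
    refine IH (right_ne_zero_of_mul ht)
      (fun hm ↦ by simpa using (hsq (hm.mul_left p)).map (algebraMap K K⟮x⟯))
      fun q hq hqm b hb ↦ ?_
    -- `b ^ q = x`, whose norm is read off the constant term of its minimal polynomial `X ^ p - C a`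
    have hnorm : Algebra.norm K b ^ q = (-1) ^ p * -a := by
      rw [← map_pow, hb, ← adjoin.powerBasis_gen hint,
        Algebra.PowerBasis.norm_gen_eq_coeff_zero_minpoly]
      simp [minpoly_gen, hx, coeff_X_pow, hp.ne_zero.symm]
    obtain ⟨c, hc⟩ : ∃ c : K, c ^ q = a := by
      rcases hp.eq_two_or_odd' with rfl | hpodd
      · exact exists_pow_eq_of_pow_eq_neg hq (fun _ ↦ hsq (even_two.mul_right m))
          (by simpa using hnorm)
      · exact ⟨_, by rw [hnorm, hpodd.neg_one_pow, neg_one_mul, neg_neg]⟩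
    exact ha q hq (dvd_mul_of_dvd_right hqm p) c hc

theorem X_pow_pow_sub_C_irreducible {K : Type u} [Field K] {t : ℕ} {a : K}
    (h : Irreducible (X ^ t - C a)) (hsq : Even t → IsSquare (-1 : K)) (r : ℕ) :
    Irreducible (X ^ t ^ r - C a) := by
  have ht : t ≠ 0 := by
    rintro rfl
    rw [pow_zero, ← C.map_one, ← map_sub] at h
    exact not_irreducible_C _ h
  refine X_pow_sub_C_irreducible_of_forall_prime (pow_ne_zero r ht)
    (fun he ↦ hsq (Nat.even_pow.mp he).1) fun p hp hpt ↦ ?_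
  exact pow_ne_of_irreducible_X_pow_sub_C h (hp.dvd_of_dvd_pow hpt) hp.ne_one

theorem irreducible_X_pow_sub_C_gen_of_irreducible_expand {K E : Type*} [Field K] [Field E]
    [Algebra K E] {f : K[X]} {t : ℕ} (ht : 0 < t) (h : Irreducible (expand K t f)) {x : E}
    (hx : minpoly K x = f) : Irreducible (X ^ t - C (AdjoinSimple.gen K x)) := by
  set M := K⟮x⟯
  set a := AdjoinSimple.gen K x
  have hint : IsIntegral K x := by
    by_contra hx'
    rw [minpoly.eq_zero hx'] at hx
    exact h.ne_zero (by rw [← hx, map_zero])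
  have hne : (X ^ t - C a : M[X]) ≠ 0 := X_pow_sub_C_ne_zero ht a
  -- A root `β` of a factor `p` is a root of `f(X^t)`, so `n t ≤ [M(β) : K] = n * deg p`.
  obtain ⟨p, hp, hpdvd⟩ := WfDvdMonoid.exists_irreducible_factor
    (not_isUnit_of_natDegree_pos _ (by rwa [natDegree_X_pow_sub_C])) hne
  have := Fact.mk hp
  let L := AdjoinRoot p
  have : Module.Free M L := Module.Free.of_divisionRing M L
  have : Module.Finite M L := (AdjoinRoot.powerBasis hp.ne_zero).finite
  have : Module.Finite K M := adjoin.finiteDimensional hint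
  have : Module.Finite K L := Module.Finite.trans M L
  set β := AdjoinRoot.root p
  have hβ : aeval β (expand K t f) = 0 := by
    have hβt : β ^ t = algebraMap M L a := by
      have := AdjoinRoot.mk_eq_zero.mpr hpdvd
      rwa [map_sub, map_pow, AdjoinRoot.mk_X, AdjoinRoot.mk_C, sub_eq_zero] at this
    have ha : aeval a f = 0 := by
      rw [← hx, ← minpoly_gen]
      exact minpoly.aeval K a
    rw [expand_aeval, hβt, aeval_algebraMap_apply, ha, map_zero]
  have hdeg : f.natDegree * t ≤ f.natDegree * p.natDegree := by
    calc f.natDegree * t = (minpoly K β).natDegree := by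
          rw [← natDegree_expand, ← minpoly.eq_of_irreducible h hβ,
            natDegree_mul_C (inv_ne_zero (leadingCoeff_ne_zero.mpr h.ne_zero))]
      _ ≤ Module.finrank K L := minpoly.natDegree_le β
      _ = f.natDegree * p.natDegree := by
          rw [← Module.finrank_mul_finrank K M L, adjoin.finrank hint, hx,
            (AdjoinRoot.powerBasis hp.ne_zero).finrank, AdjoinRoot.powerBasis_dim]
  have hassoc : Associated p (X ^ t - C a) := by
    refine associated_of_dvd_of_natDegree_le hpdvd hne ?_
    rw [natDegree_X_pow_sub_C]
    exact Nat.le_of_mul_le_mul_left hdeg (hx ▸ minpoly.natDegree_pos hint)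
  exact hassoc.irreducible hp

theorem irreducible_expand_pow_of_irreducible_expand {K : Type u} [Field K] {f : K[X]}
    (hf : f.Monic) {t : ℕ} (ht : 0 < t) (h : Irreducible (expand K t f))
    (hsq : Even t → IsSquare (-1 : AdjoinRoot f)) (r : ℕ) :
    Irreducible (expand K (t ^ r) f) := by
  rw [expand_eq_comp_X_pow]
  refine irreducible_comp hf (monic_X_pow _) (of_irreducible_expand ht.ne' h) fun E _ _ x hx ↦ ?_
  rw [Polynomial.map_pow, map_X]
  refine X_pow_pow_sub_C_irreducible
    (irreducible_X_pow_sub_C_gen_of_irreducible_expand ht h hx) (fun he ↦ ?_) r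
  have hroot : f.eval₂ (algebraMap K K⟮x⟯) (AdjoinSimple.gen K x) = 0 := by
    rw [← aeval_def, ← hx]
    exact aeval_gen_minpoly K x
  simpa using (hsq he).map (AdjoinRoot.lift _ _ hroot)

theorem FiniteField.isSquare_neg_one_of_four_dvd_card_sub_one {L : Type*} [Field L] [Finite L]
    (h : 4 ∣ Nat.card L - 1) : IsSquare (-1 : L) := by
  have := Fintype.ofFinite L
  rw [Nat.card_eq_fintype_card] at h
  rw [FiniteField.isSquare_neg_one_iff]
  have := Fintype.one_lt_card (α := L)
  omega

theorem AdjoinRoot.natCard_eq_pow_natDegree {F : Type*} [Field F] {f : F[X]}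
    (hf : f ≠ 0) : Nat.card (AdjoinRoot f) = Nat.card F ^ f.natDegree := by
  have := (AdjoinRoot.powerBasis hf).finite
  rw [Module.natCard_eq_pow_finrank (K := F), (AdjoinRoot.powerBasis hf).finrank,
    AdjoinRoot.powerBasis_dim]

theorem stmt4 {F : Type*} [Field F] [Fintype F] (f : Polynomial F) (n t : ℕ)
    (hn : f.natDegree = n) (ht : 0 < t) (h4 : Even t → 4 ∣ (Fintype.card F ^ n - 1))
    (h : Irreducible (Polynomial.expand F t f)) :
    ∀ r : ℕ, Irreducible (Polynomial.expand F (t ^ r) f) := by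
  intro r
  have hf : Irreducible f := of_irreducible_expand ht.ne' h
  set g := f * C f.leadingCoeff⁻¹
  have hg : g.Monic := monic_mul_leadingCoeff_inv hf.ne_zero
  have hfg : Associated f g := associated_mul_unit_right _ _
    (isUnit_C.mpr (inv_ne_zero (leadingCoeff_ne_zero.mpr hf.ne_zero)).isUnit)
  refine (hfg.map (expand F _)).irreducible_iff.mpr
    (irreducible_expand_pow_of_irreducible_expand hg ht
      ((hfg.map (expand F t)).irreducible h) (fun he ↦ ?_) r)
  have : Fact (Irreducible g) := ⟨hfg.irreducible hf⟩
  have : Module.Finite F (AdjoinRoot g) := (AdjoinRoot.powerBasis hg.ne_zero).finite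
  have : Finite (AdjoinRoot g) := Module.finite_of_finite F
  refine FiniteField.isSquare_neg_one_of_four_dvd_card_sub_one ?_
  rw [AdjoinRoot.natCard_eq_pow_natDegree hg.ne_zero, natDegree_mul_leadingCoeff_inv _ hf.ne_zero,
    hn, Nat.card_eq_fintype_card]
  exact h4 he
end

section
/- Let q be an odd prime power with q ≡ 3 (mod 4), and let c ∈ F_q be a nonsquare such that 1 − c is also a nonsquare. Let λ ∈ F_{q^2} with λ^2 = c and let r(x) = x + 1 − √(1−c) ∈ F_{q^2}[x] be a linear factor of x^2 + 2x + c over F_{q^2}. Then r(λ)·r(−λ) = 2(1 − c − √(1−c)) is not a square in F_{q^2}. -/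
/-! Write `q = #F`. Since `1 - c` is a nonsquare of `F`, Euler's criterion gives `μ ^ q = -μ`, so the
Frobenius `x ↦ x ^ q` acts on `K = F(μ)` as conjugation `μ ↦ -μ`, and the norm `x ^ (q + 1)` of
`x = 2 (1 - c - μ)` is `4 (1 - c) ^ 2 - 4 (1 - c) = 4 · (-1) · c · (1 - c)`. As `q ≡ 3 mod 4`, this is
a product of three nonsquares of `F`, hence a nonsquare. On the other hand the norm `n` of a square
`y ^ 2` of `K` satisfies `n ^ ((q - 1) / 2) = y ^ (q ^ 2 - 1) = 1`, so it is a square of `F`. -/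

namespace FiniteField

variable {F : Type*} [Field F] [Fintype F]

theorem pow_card_div_two_eq_neg_one_of_not_isSquare (hF : ringChar F ≠ 2) {a : F}
    (ha : ¬IsSquare a) : a ^ (Fintype.card F / 2) = -1 := by
  have ha0 : a ≠ 0 := by rintro rfl; exact ha .zero
  exact (pow_dichotomy hF ha0).resolve_left fun h => ha ((isSquare_iff hF ha0).mpr h)

theorem pow_card_eq_neg_of_sq_eq_algebraMap {K : Type*} [CommRing K] [Algebra F K]
    (hF : ringChar F ≠ 2) {d : F} (hd : ¬IsSquare d) {μ : K} (hμ : μ ^ 2 = algebraMap F K d) :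
    μ ^ Fintype.card F = -μ := by
  have hq : 2 * (Fintype.card F / 2) + 1 = Fintype.card F := by
    have := odd_card_of_char_ne_two hF
    omega
  rw [← hq, pow_succ, pow_mul, hμ, ← map_pow, pow_card_div_two_eq_neg_one_of_not_isSquare hF hd,
    map_neg, map_one, neg_one_mul]

theorem not_isSquare_mul_of_not_isSquare {a b c : F} (ha : ¬IsSquare a) (hb : ¬IsSquare b)
    (hc : ¬IsSquare c) : ¬IsSquare (a * b * c) := by
  classical
  rw [← quadraticChar_neg_one_iff_not_isSquare] at ha hb hc ⊢
  rw [map_mul, map_mul, ha, hb, hc]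
  norm_num

theorem not_isSquare_of_pow_card_add_one_eq {K : Type*} [Field K] [Fintype K] [Algebra F K]
    (hcard : Fintype.card K = Fintype.card F ^ 2) (hF : ringChar F ≠ 2) {n : F}
    (hn : ¬IsSquare n) {x : K} (hx : x ^ (Fintype.card F + 1) = algebraMap F K n) :
    ¬IsSquare x := by
  have hn0 : n ≠ 0 := by rintro rfl; exact hn .zero
  rintro ⟨y, rfl⟩
  have hy : y ≠ 0 := by
    rintro rfl
    rw [mul_zero, zero_pow (Nat.succ_ne_zero _), eq_comm, map_eq_zero] at hx
    exact hn0 hx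
  have hexp : (Fintype.card F + 1) * (2 * (Fintype.card F / 2)) = Fintype.card K - 1 := by
    rw [Nat.two_mul_odd_div_two (odd_card_of_char_ne_two hF), hcard, ← Nat.sq_sub_sq, one_pow]
  have hn1 : algebraMap F K (n ^ (Fintype.card F / 2)) = 1 := by
    rw [map_pow, ← hx, ← pow_card_sub_one_eq_one y hy, ← hexp]
    ring
  exact hn ((isSquare_iff hF hn0).mpr ((map_eq_one_iff _ (algebraMap F K).injective).mp hn1))

theorem pow_card_add_one_of_pow_card_eq_neg {K : Type*} [CommRing K] [Algebra F K] {d : F}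
    {μ : K} (hμ2 : μ ^ 2 = algebraMap F K d) (hμ : μ ^ Fintype.card F = -μ) (a b : F) :
    (algebraMap F K a + algebraMap F K b * μ) ^ (Fintype.card F + 1) =
      algebraMap F K (a ^ 2 - b ^ 2 * d) := by
  have hconj : (algebraMap F K a + algebraMap F K b * μ) ^ Fintype.card F =
      algebraMap F K a - algebraMap F K b * μ := by
    change frobeniusAlgHom F K _ = _
    rw [map_add, map_mul, AlgHom.commutes, AlgHom.commutes, coe_frobeniusAlgHom]
    dsimp only
    rw [hμ]
    ring
  rw [pow_succ, hconj, map_sub, map_mul, map_pow, map_pow, ← hμ2]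
  ring

end FiniteField

open FiniteField in
theorem stmt14 {F K : Type*} [Field F] [Fintype F] [Field K] [Fintype K] [Algebra F K]
    (hcard : Fintype.card K = Fintype.card F ^ 2) (hq : Fintype.card F % 4 = 3)
    (c : F) (hc : ¬ IsSquare c) (h1c : ¬ IsSquare (1 - c))
    (l μ : K) (hl : l ^ 2 = algebraMap F K c) (hμ : μ ^ 2 = algebraMap F K (1 - c)) :
    (l + 1 - μ) * (-l + 1 - μ) = 2 * (1 - algebraMap F K c - μ) ∧
    ¬ IsSquare ((l + 1 - μ) * (-l + 1 - μ)) := by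
  have hprod : (l + 1 - μ) * (-l + 1 - μ) = 2 * (1 - algebraMap F K c - μ) := by
    rw [map_sub, map_one] at hμ
    linear_combination hμ - hl
  refine ⟨hprod, ?_⟩
  have hF : ringChar F ≠ 2 := fun h => by
    have := even_card_iff_char_two.mp h
    omega
  have hnorm := pow_card_add_one_of_pow_card_eq_neg hμ
    (pow_card_eq_neg_of_sq_eq_algebraMap hF h1c hμ) (2 * (1 - c)) (-2)
  have hN : ¬IsSquare ((2 * (1 - c)) ^ 2 - (-2) ^ 2 * (1 - c)) := by
    rintro ⟨r, hr⟩
    refine not_isSquare_mul_of_not_isSquare (isSquare_neg_one_iff.not.mpr (not_not.mpr hq)) hc h1c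
      ⟨r / 2, ?_⟩
    field_simp [Ring.two_ne_zero hF]
    linear_combination hr
  rw [hprod]
  refine not_isSquare_of_pow_card_add_one_eq hcard hF hN ?_
  rw [← hnorm, map_mul, map_sub, map_neg, map_one, map_ofNat]
  ring
end

section
/- Let q be odd, c ∈ F_q a nonsquare, and λ ∈ F_{q^2} with λ^2 = c. Let g ∈ F_q[x] have degree n with g(−λ) ≠ 0. Define McNay's transform g^T_c(x) = (2x)^n g((x^2+c)/(2x)) and, for σ = [[λ,λ],[−1,1]] ∈ GL_2(F_{q^2}), the transform g^{R_{σ,2}} = P_{σ^{-1}}(S_2(P_σ(g))). Then g^T_c(x) = (2λ)^n · g^{R_{σ,2}}(x). -/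
/-! Both sides are homogenised substitutions into `g`, so it suffices to compare them at the
generic point `x` of `K(X)`. With `w = σ⁻¹·x = (x - λ)/(x + λ)` one has
`σ·w² = λ(w² + 1)/(1 - w²) = (x² + λ²)/(2x)`, so both sides are multiples of
`g((x² + λ²)/(2x))`, and the scalar factors match because `2λ · ((x + λ)/(2λ))² · (1 - w²) = 2x`.
A nonsquare exists only in odd characteristic, so `2 ≠ 0`, and `g(-λ) ≠ 0` is exactly what keeps
`deg P_σ(g) = deg g`. -/

open Polynomial

noncomputable def Ptrans {F : Type*} [Field F] (a b c d : F) (f : Polynomial F) : Polynomial F :=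
  ∑ i ∈ Finset.range (f.natDegree + 1),
    C (f.coeff i) * (C a * X + C b) ^ i * (C c * X + C d) ^ (f.natDegree - i)

noncomputable def Rst {F : Type*} [Field F] (t : ℕ) (a b c d : F) (g : Polynomial F) :
    Polynomial F :=
  Ptrans (d / (a * d - b * c)) (-b / (a * d - b * c)) (-c / (a * d - b * c)) (a / (a * d - b * c))
    (Polynomial.expand F t (Ptrans a b c d g))

/-- McNay's transform `g^T_c(x) = (2x)^{deg g} · g((x²+c)/(2x))`, with cleared
denominators: `∑ gᵢ (x²+c)^i (2x)^{n-i}`. -/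
noncomputable def mcNay {F : Type*} [Field F] (c : F) (g : Polynomial F) : Polynomial F :=
  ∑ i ∈ Finset.range (g.natDegree + 1),
    C (g.coeff i) * (X ^ 2 + C c) ^ i * (2 * X) ^ (g.natDegree - i)

section Homogenization

variable {K L : Type*} [Field K] [Field L] [Algebra K L]

theorem sum_coeff_mul_pow_mul_pow_eq_pow_mul_aeval {f : K[X]} {m : ℕ} (hm : f.natDegree ≤ m)
    (a : L) {b : L} (hb : b ≠ 0) :
    ∑ i ∈ Finset.range (m + 1), algebraMap K L (f.coeff i) * a ^ i * b ^ (m - i) =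
      b ^ m * aeval (a / b) f := by
  rw [aeval_eq_sum_range' (Nat.lt_succ_of_le hm), Finset.mul_sum]
  refine Finset.sum_congr rfl fun i hi => ?_
  rw [Algebra.smul_def, div_pow, ← pow_sub_mul_pow b (Nat.lt_succ_iff.mp (Finset.mem_range.mp hi))]
  field_simp

theorem aeval_Ptrans (a b c d : K) (f : K[X]) {x : L}
    (hx : algebraMap K L c * x + algebraMap K L d ≠ 0) :
    aeval x (Ptrans a b c d f) = (algebraMap K L c * x + algebraMap K L d) ^ f.natDegree *
      aeval ((algebraMap K L a * x + algebraMap K L b) /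
        (algebraMap K L c * x + algebraMap K L d)) f := by
  rw [Ptrans, ← sum_coeff_mul_pow_mul_pow_eq_pow_mul_aeval le_rfl _ hx]
  simp [map_sum]

theorem aeval_mcNay (c : K) (g : K[X]) {x : L} (hx : 2 * x ≠ 0) :
    aeval x (mcNay c g) = (2 * x) ^ g.natDegree * aeval ((x ^ 2 + algebraMap K L c) / (2 * x)) g := by
  rw [mcNay, ← sum_coeff_mul_pow_mul_pow_eq_pow_mul_aeval le_rfl _ hx]
  simp [map_sum, map_ofNat]

end Homogenization

section Degree

variable {K : Type*} [Field K]

theorem natDegree_C_mul_X_add_C_pow_le (a b : K) (i : ℕ) : ((C a * X + C b) ^ i).natDegree ≤ i :=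
  natDegree_pow_le_of_le i natDegree_linear_le |>.trans_eq (mul_one i)

theorem coeff_C_mul_X_add_C_pow_self (a b : K) (i : ℕ) : ((C a * X + C b) ^ i).coeff i = a ^ i := by
  simpa using coeff_pow_of_natDegree_le (m := i) (natDegree_linear_le (a := a) (b := b))

theorem natDegree_Ptrans_le (a b c d : K) (f : K[X]) : (Ptrans a b c d f).natDegree ≤ f.natDegree := by
  refine natDegree_sum_le_of_forall_le _ _ fun i hi => ?_
  have hi : i ≤ f.natDegree := Nat.lt_succ_iff.mp (Finset.mem_range.mp hi)
  rw [mul_assoc]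
  refine natDegree_C_mul_le _ _ |>.trans <| natDegree_mul_le.trans ?_
  have := natDegree_C_mul_X_add_C_pow_le a b i
  have := natDegree_C_mul_X_add_C_pow_le c d (f.natDegree - i)
  omega

theorem coeff_Ptrans_natDegree (a b c d : K) (f : K[X]) :
    (Ptrans a b c d f).coeff f.natDegree =
      ∑ i ∈ Finset.range (f.natDegree + 1), f.coeff i * a ^ i * c ^ (f.natDegree - i) := by
  rw [Ptrans, finsetSum_coeff]
  refine Finset.sum_congr rfl fun i hi => ?_
  have hi : i ≤ f.natDegree := Nat.lt_succ_iff.mp (Finset.mem_range.mp hi)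
  have := coeff_mul_add_eq_of_natDegree_le (natDegree_C_mul_X_add_C_pow_le a b i)
    (natDegree_C_mul_X_add_C_pow_le c d (f.natDegree - i))
  rw [Nat.add_sub_cancel' hi, coeff_C_mul_X_add_C_pow_self, coeff_C_mul_X_add_C_pow_self] at this
  rw [mul_assoc, coeff_C_mul, this, mul_assoc]

theorem natDegree_Ptrans {a c : K} (b d : K) {f : K[X]} (hc : c ≠ 0) (hf : f.eval (a / c) ≠ 0) :
    (Ptrans a b c d f).natDegree = f.natDegree := by
  refine (natDegree_Ptrans_le a b c d f).antisymm (le_natDegree_of_ne_zero ?_)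
  rw [coeff_Ptrans_natDegree]
  have := sum_coeff_mul_pow_mul_pow_eq_pow_mul_aeval (L := K) (le_refl f.natDegree) a hc
  simp only [Algebra.algebraMap_self, RingHom.id_apply, coe_aeval_eq_eval] at this
  rw [this]
  exact mul_ne_zero (pow_ne_zero _ hc) hf

end Degree

section McNay

variable {K : Type*} [Field K]

theorem aeval_mcNay_eq_aeval_Rst {L : Type*} [Field L] [Algebra K L] (h2 : (2 : K) ≠ 0)
    {l : K} (hl : l ≠ 0) {G : K[X]} (hG : G.eval (-l) ≠ 0) {x : L} (hx : x ≠ 0)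
    (hxl : x + algebraMap K L l ≠ 0) :
    aeval x (mcNay (l ^ 2) G) =
      (2 * algebraMap K L l) ^ G.natDegree * aeval x (Rst 2 l l (-1) 1 G) := by
  have hP : (Ptrans l l (-1) 1 G).natDegree = G.natDegree :=
    natDegree_Ptrans l 1 (by norm_num) (by rwa [div_neg, div_one])
  have h2L : (2 : L) ≠ 0 := by
    simpa only [map_ofNat] using (map_ne_zero (algebraMap K L)).mpr h2
  obtain ⟨y, hly⟩ : ∃ y, algebraMap K L l = y := ⟨_, rfl⟩
  have hy : y ≠ 0 := hly ▸ (map_ne_zero (algebraMap K L)).mpr hl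
  rw [hly] at hxl
  have h2x : 2 * x ≠ 0 := mul_ne_zero h2L hx
  have h2y : 2 * y ≠ 0 := mul_ne_zero h2L hy
  have hB : - -1 / (2 * y) * x + y / (2 * y) = (x + y) / (2 * y) := by field_simp
  have hw : (1 / (2 * y) * x + -y / (2 * y)) / ((x + y) / (2 * y)) = (x - y) / (x + y) := by
    field_simp; ring
  have hden : -1 * ((x - y) / (x + y)) ^ 2 + 1 = 2 * x * (2 * y) / (x + y) ^ 2 := by
    field_simp; ring
  have harg : (y * ((x - y) / (x + y)) ^ 2 + y) / (2 * x * (2 * y) / (x + y) ^ 2) =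
      (x ^ 2 + y ^ 2) / (2 * x) := by
    field_simp; ring
  have hscale : 2 * y * (((x + y) / (2 * y)) ^ 2 * (2 * x * (2 * y) / (x + y) ^ 2)) = 2 * x := by
    field_simp
  have hdet : l * 1 - l * -1 = 2 * l := by ring
  rw [Rst, hdet, aeval_Ptrans _ _ _ _ _ ?hB_ne, natDegree_expand, hP, expand_aeval,
    aeval_Ptrans _ _ _ _ _ ?hw_ne, aeval_mcNay _ _ h2x]
  all_goals simp only [map_div₀, map_neg, map_one, map_mul, map_ofNat, map_pow, hly, hB, hw, hden,
    harg]
  case hB_ne => exact div_ne_zero hxl h2y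
  case hw_ne => exact div_ne_zero (mul_ne_zero h2x h2y) (pow_ne_zero 2 hxl)
  generalize aeval ((x ^ 2 + y ^ 2) / (2 * x)) G = v
  generalize (x + y) / (2 * y) = B at hscale ⊢
  generalize 2 * x * (2 * y) / (x + y) ^ 2 = D at hscale ⊢
  rw [← hscale]
  ring

theorem mcNay_sq_eq_C_mul_Rst (h2 : (2 : K) ≠ 0) {l : K} (hl : l ≠ 0) {G : K[X]}
    (hG : G.eval (-l) ≠ 0) :
    mcNay (l ^ 2) G = C ((2 * l) ^ G.natDegree) * Rst 2 l l (-1) 1 G := by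
  have hXl : RatFunc.X + algebraMap K (RatFunc K) l ≠ 0 := by
    simpa [RatFunc.algebraMap_eq_C] using
      (map_ne_zero_iff _ (RatFunc.algebraMap_injective K)).mpr (X_add_C_ne_zero l)
  apply RatFunc.algebraMap_injective K
  simp only [← RatFunc.aeval_X_left_eq_algebraMap, map_mul, aeval_C,
    aeval_mcNay_eq_aeval_Rst h2 hl hG RatFunc.X_ne_zero hXl, map_pow, map_ofNat]

theorem map_mcNay {F : Type*} [Field F] (f : F →+* K) (c : F) (g : F[X]) :
    (mcNay c g).map f = mcNay (f c) (g.map f) := by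
  simp [mcNay, Polynomial.map_sum, natDegree_map]

end McNay

theorem stmt15_general {F K : Type*} [Field F] [Fintype F] [Field K] [Algebra F K]
    (c : F) (hc : ¬ IsSquare c) (l : K) (hl : l ^ 2 = algebraMap F K c)
    (g : Polynomial F) (n : ℕ) (hn : g.natDegree = n) (hroot : aeval (-l) g ≠ 0) :
    (mcNay c g).map (algebraMap F K) =
      C ((2 * l) ^ n) * Rst 2 l l (-1) 1 (g.map (algebraMap F K)) := by
  have h2 : (2 : F) ≠ 0 := Ring.two_ne_zero fun h => hc (FiniteField.isSquare_of_char_two h c)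
  have hl0 : l ≠ 0 := by
    rintro rfl
    have hc0 : c = 0 := (map_eq_zero (algebraMap F K)).mp (by simpa using hl.symm)
    exact hc (hc0 ▸ IsSquare.zero)
  have h2K : (2 : K) ≠ 0 := by
    simpa only [map_ofNat] using (map_ne_zero (algebraMap F K)).mpr h2
  rw [map_mcNay, ← hl, mcNay_sq_eq_C_mul_Rst h2K hl0 (by rwa [eval_map_algebraMap]),
    natDegree_map, hn]

theorem stmt15 {F K : Type*} [Field F] [Fintype F] [Field K] [Fintype K] [Algebra F K]
    (hq : Odd (Fintype.card F)) (hcard : Fintype.card K = Fintype.card F ^ 2)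
    (c : F) (hc : ¬ IsSquare c) (l : K) (hl : l ^ 2 = algebraMap F K c)
    (g : Polynomial F) (n : ℕ) (hn : g.natDegree = n) (hroot : aeval (-l) g ≠ 0) :
    (mcNay c g).map (algebraMap F K) =
      C ((2 * l) ^ n) * Rst 2 l l (-1) 1 (g.map (algebraMap F K)) :=
  stmt15_general c hc l hl g n hn hroot
end
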